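/- If a linear endomorphism A of a finite-dimensional real vector space is diagonalizable with real eigenvalues, and v is a vector such that {e^{tA} v : t ∈ ℝ} is bounded, then A v = 0. -/

import Mathlib

/-- The exponential of a linear endomorphism of a finite-dimensional real vector space,
computed through matrices with respect to a basis (the result is basis-independent). -/
noncomputable def expEnd {V : Type*} [AddCommGroup V] [Module ℝ V] [FiniteDimensional ℝ V]
    (A : V →ₗ[ℝ] V) : V →ₗ[ℝ] V :=
  (Matrix.toLin (Module.finBasis ℝ V) (Module.finBasis ℝ V))
    (NormedSpace.exp ((LinearMap.toMatrix (Module.finBasis ℝ V) (Module.finBasis ℝ V)) A))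

/-! In an eigenbasis `b` of `A`, the coordinates of `exp (t A) v` are `exp (t μᵢ) cᵢ`, where
`cᵢ` are those of `v`. The coordinate functionals are continuous, so a bounded orbit bounds each
`t ↦ exp (t μᵢ) cᵢ`, which forces `μᵢ cᵢ = 0`; these are exactly the coordinates of `A v`. -/

open Module

section Diagonal

variable {R M ι : Type*} [CommSemiring R] [AddCommMonoid M] [Module R M] [Fintype ι]
  [DecidableEq ι] {b : Basis ι R M} {A : M →ₗ[R] M} {μ : ι → R}

theorem LinearMap.toMatrix_eq_diagonal_of_apply_eq_smul (hdiag : ∀ i, A (b i) = μ i • b i) :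
    LinearMap.toMatrix b b A = Matrix.diagonal μ := by
  ext i j
  rw [LinearMap.toMatrix_apply, hdiag, map_smul, Basis.repr_self, Matrix.diagonal_apply]
  by_cases h : i = j <;> simp [h]

theorem Module.Basis.repr_apply_of_apply_eq_smul (hdiag : ∀ i, A (b i) = μ i • b i)
    (v : M) (i : ι) : b.repr (A v) i = μ i * b.repr v i := by
  rw [← LinearMap.toMatrix_mulVec_repr b b, LinearMap.toMatrix_eq_diagonal_of_apply_eq_smul hdiag,
    Matrix.mulVec_diagonal]

end Diagonal

section ExpEnd

variable {V ι : Type*} [AddCommGroup V] [Module ℝ V] [FiniteDimensional ℝ V] [Fintype ι]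
  [DecidableEq ι]

open scoped Matrix.Norms.Operator in
theorem expEnd_eq_toLin_exp_toMatrix (b : Basis ι ℝ V) (A : V →ₗ[ℝ] V) :
    expEnd A = Matrix.toLin b b (NormedSpace.exp (LinearMap.toMatrix b b A)) := by
  set fb := finBasis ℝ V
  -- conjugation by the change of basis is a continuous algebra map, so it commutes with `exp`
  let ψ : Matrix ι ι ℝ ≃ₐ[ℝ] Matrix (Fin (finrank ℝ V)) (Fin (finrank ℝ V)) ℝ :=
    (Matrix.toLinAlgEquiv b).trans (LinearMap.toMatrixAlgEquiv fb)
  have hψ (M : Matrix ι ι ℝ) : ψ M = LinearMap.toMatrix fb fb (Matrix.toLin b b M) := by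
    simp [ψ, LinearMap.toMatrixAlgEquiv, Matrix.toLinAlgEquiv]
  have hA : LinearMap.toMatrix fb fb A = ψ (LinearMap.toMatrix b b A) := by
    rw [hψ, Matrix.toLin_toMatrix]
  have hexp : NormedSpace.exp (ψ (LinearMap.toMatrix b b A))
      = ψ (NormedSpace.exp (LinearMap.toMatrix b b A)) :=
    (NormedSpace.map_exp ψ (LinearMap.continuous_of_finiteDimensional ψ.toLinearMap) _).symm
  rw [expEnd, hA, hexp, hψ, Matrix.toLin_toMatrix]

theorem Module.Basis.repr_expEnd_apply_of_apply_eq_smul {b : Basis ι ℝ V} {A : V →ₗ[ℝ] V}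
    {μ : ι → ℝ} (hdiag : ∀ i, A (b i) = μ i • b i) (v : V) (i : ι) :
    b.repr (expEnd A v) i = Real.exp (μ i) * b.repr v i := by
  rw [expEnd_eq_toLin_exp_toMatrix b, LinearMap.toMatrix_eq_diagonal_of_apply_eq_smul hdiag,
    Matrix.exp_diagonal, Matrix.repr_toLin, Matrix.mulVec_diagonal, Real.exp_eq_exp_ℝ, Pi.coe_exp]

end ExpEnd

theorem Real.mul_eq_zero_of_isBounded_range_exp_mul {μ c : ℝ}
    (h : Bornology.IsBounded (Set.range fun t => Real.exp (t * μ) * c)) : μ * c = 0 := by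
  obtain ⟨K, hK⟩ := h.exists_norm_le
  -- `exp (s μ²) ≥ 1 + s μ²` makes `s ↦ |c| (1 + s μ²)` bounded above, so its slope vanishes
  have hlin (s : ℝ) : |c| + s * (μ ^ 2 * |c|) ≤ K := by
    calc |c| + s * (μ ^ 2 * |c|) = (s * μ ^ 2 + 1) * |c| := by ring
      _ ≤ Real.exp (s * μ ^ 2) * |c| := by gcongr; exact Real.add_one_le_exp _
      _ = ‖Real.exp ((s * μ) * μ) * c‖ := by
        rw [Real.norm_eq_abs, abs_mul, abs_of_pos (Real.exp_pos _), mul_assoc, ← pow_two]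
      _ ≤ K := hK _ ⟨s * μ, rfl⟩
  have hslope : μ ^ 2 * |c| = 0 := by
    by_contra hne
    have hpos : 0 < μ ^ 2 * |c| := lt_of_le_of_ne (by positivity) (Ne.symm hne)
    have := hlin ((K + 1) / (μ ^ 2 * |c|))
    rw [div_mul_cancel₀ _ hpos.ne'] at this
    linarith [abs_nonneg c]
  simpa [pow_two, mul_assoc] using hslope

/-- If `A` is diagonalizable with real eigenvalues and `{e^{tA} v : t ∈ ℝ}` is bounded,
then `A v = 0`. -/
theorem apply_eq_zero_of_bounded_exp_orbit {V : Type*} [NormedAddCommGroup V]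
    [NormedSpace ℝ V] [FiniteDimensional ℝ V] (A : V →ₗ[ℝ] V) {ι : Type*} [Fintype ι]
    (b : Module.Basis ι ℝ V) (μ : ι → ℝ) (hdiag : ∀ i, A (b i) = μ i • b i) (v : V)
    (hbdd : Bornology.IsBounded {x : V | ∃ t : ℝ, x = expEnd (t • A) v}) :
    A v = 0 := by
  classical
  have hdiag_smul (t : ℝ) (i : ι) : (t • A) (b i) = (t * μ i) • b i := by
    rw [LinearMap.smul_apply, hdiag, smul_smul]
  refine b.ext_elem fun i => ?_
  have hcoord : Bornology.IsBounded (Set.range fun t => Real.exp (t * μ i) * b.repr v i) := by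
    refine ((LinearMap.toContinuousLinearMap (b.coord i)).lipschitz.isBounded_image hbdd).subset ?_
    rintro _ ⟨t, rfl⟩
    exact ⟨_, ⟨t, rfl⟩, b.repr_expEnd_apply_of_apply_eq_smul (hdiag_smul t) v i⟩
  rw [b.repr_apply_of_apply_eq_smul hdiag, map_zero, Finsupp.zero_apply]
  exact Real.mul_eq_zero_of_isBounded_range_exp_mul hcoord
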